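/- If A and B are output types, then the product type A ∧ B = ∀X((A → (B → X)) → X), the disjoint sum type A ∨ B = ∀X((A → X) → ((B → X) → X)), and the list type LA = ∀X(X → ((A → (X → X)) → X)) are output types. -/

import Mathlib

/-!
Common development: pure λ-calculus in de Bruijn notation, β-reduction,
weak head reduction, types of system F (with type constants), the typing
systems F, F₀ (F without (∀e)) and the simple system S, saturated sets and
interpretations, and the notions of input / output / data types, following
Farkh-Nour, "Les types de données syntaxiques du système F".
-/

namespace FarkhNour

/-- Pure λ-terms, in de Bruijn notation. -/
inductive Trm : Type
  | var : ℕ → Trm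
  | app : Trm → Trm → Trm
  | lam : Trm → Trm

/-- Lift (shift) by `d` the free variables of a term, starting at index `k`. -/
def liftTrm (d : ℕ) : ℕ → Trm → Trm
  | k, .var n => if n < k then .var n else .var (n + d)
  | k, .app a b => .app (liftTrm d k a) (liftTrm d k b)
  | k, .lam a => .lam (liftTrm d (k + 1) a)

/-- β-substitution `t[u/k]` (the binder for `k` is consumed: variables above `k`
are decremented), as used in the β-reduction rule. -/
def substTrm : Trm → ℕ → Trm → Trm
  | .var n, k, u => if n < k then .var n else if n = k then liftTrm k 0 u else .var (n - 1)
  | .app a b, k, u => .app (substTrm a k u) (substTrm b k u)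
  | .lam a, k, u => .lam (substTrm a (k + 1) u)

/-- Named-style capture-avoiding substitution `t[u/x]` of the term `u` for the
free variable `x` of `t` : the other free variables are left unchanged. -/
def replaceVar : Trm → ℕ → Trm → Trm
  | .var n, k, u => if n = k then u else .var n
  | .app a b, k, u => .app (replaceVar a k u) (replaceVar b k u)
  | .lam a, k, u => .lam (replaceVar a (k + 1) (liftTrm 1 0 u))

/-- Lifting of a parallel substitution under a binder. -/
def liftSub (σ : ℕ → Trm) : ℕ → Trm
  | 0 => .var 0
  | n + 1 => liftTrm 1 0 (σ n)

/-- Simultaneous (parallel) capture-avoiding substitution. -/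
def msubst (σ : ℕ → Trm) : Trm → Trm
  | .var n => σ n
  | .app a b => .app (msubst σ a) (msubst σ b)
  | .lam a => .lam (msubst (liftSub σ) a)

/-- One step of β-reduction. -/
inductive BetaStep : Trm → Trm → Prop
  | beta (t u : Trm) : BetaStep (.app (.lam t) u) (substTrm t 0 u)
  | appL {t t' : Trm} (u : Trm) : BetaStep t t' → BetaStep (.app t u) (.app t' u)
  | appR (t : Trm) {u u' : Trm} : BetaStep u u' → BetaStep (.app t u) (.app t u')
  | lam {t t' : Trm} : BetaStep t t' → BetaStep (.lam t) (.lam t')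

/-- Many-step β-reduction `t →β t'`. -/
def BetaRed : Trm → Trm → Prop := Relation.ReflTransGen BetaStep

/-- β-equivalence `t ≃β t'`. -/
def BetaEq : Trm → Trm → Prop := Relation.EqvGen BetaStep

/-- A term is normal iff no β-reduction step applies to it. -/
def IsNormal (t : Trm) : Prop := ∀ u, ¬ BetaStep t u

/-- `FreeIn k t` : the variable (de Bruijn index) `k` occurs free in `t`. -/
def FreeIn : ℕ → Trm → Prop
  | k, .var n => n = k
  | k, .app a b => FreeIn k a ∨ FreeIn k b
  | k, .lam a => FreeIn (k + 1) a

/-- A closed term. -/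
def TrmClosed (t : Trm) : Prop := ∀ k, ¬ FreeIn k t

/-- One step of weak head reduction. -/
inductive WHStep : Trm → Trm → Prop
  | beta (t u : Trm) : WHStep (.app (.lam t) u) (substTrm t 0 u)
  | app {t t' : Trm} (u : Trm) : WHStep t t' → WHStep (.app t u) (.app t' u)

/-- Weak head reduction `t ≻_f t'`. -/
def WHRed : Trm → Trm → Prop := Relation.ReflTransGen WHStep

/-- Types of system F, in de Bruijn notation, with type constants
(the constant `0` is the distinguished constant `O`, the constant `1` is `⊥`). -/
inductive Ty : Type
  | var : ℕ → Ty
  | const : ℕ → Ty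
  | arr : Ty → Ty → Ty
  | all : Ty → Ty

/-- The distinguished type constant `O`. -/
def tyO : Ty := .const 0

/-- The distinguished type constant `⊥`. -/
def tyBot : Ty := .const 1

/-- Lift (shift) by `d` the free type variables, starting at index `k`. -/
def liftTy (d : ℕ) : ℕ → Ty → Ty
  | k, .var n => if n < k then .var n else .var (n + d)
  | _, .const c => .const c
  | k, .arr a b => .arr (liftTy d k a) (liftTy d k b)
  | k, .all a => .all (liftTy d (k + 1) a)

/-- Capture-avoiding type substitution `A[G/k]`. -/
def substTy : Ty → ℕ → Ty → Ty
  | .var n, k, G => if n < k then .var n else if n = k then liftTy k 0 G else .var (n - 1)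
  | .const c, _, _ => .const c
  | .arr a b, k, G => .arr (substTy a k G) (substTy b k G)
  | .all a, k, G => .all (substTy a (k + 1) G)

/-- `TyFreeIn k A` : the type variable `k` occurs free in `A`. -/
def TyFreeIn : ℕ → Ty → Prop
  | k, .var n => n = k
  | _, .const _ => False
  | k, .arr a b => TyFreeIn k a ∨ TyFreeIn k b
  | k, .all a => TyFreeIn (k + 1) a

/-- Boolean version of `TyFreeIn`. -/
def tyFreeInB : ℕ → Ty → Bool
  | k, .var n => n == k
  | _, .const _ => false
  | k, .arr a b => tyFreeInB k a || tyFreeInB k b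
  | k, .all a => tyFreeInB (k + 1) a

/-- A closed type. -/
def TyClosed (A : Ty) : Prop := ∀ k, ¬ TyFreeIn k A

/-- `ContainsConst c A` : the type constant `c` occurs in `A`. -/
def ContainsConst : ℕ → Ty → Prop
  | _, .var _ => False
  | c, .const c' => c' = c
  | c, .arr a b => ContainsConst c a ∨ ContainsConst c b
  | c, .all a => ContainsConst c a

/-- The typing judgment `Γ ⊢_F t : A` of system F, with rules
(ax), (→i), (→e), (∀i), (∀e). -/
inductive TypF : List Ty → Trm → Ty → Prop
  | var (Γ : List Ty) (n : ℕ) (A : Ty) : Γ[n]? = some A → TypF Γ (.var n) A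
  | abs {Γ : List Ty} {t : Trm} {B C : Ty} :
      TypF (B :: Γ) t C → TypF Γ (.lam t) (.arr B C)
  | app {Γ : List Ty} {u v : Trm} {B C : Ty} :
      TypF Γ u (.arr B C) → TypF Γ v B → TypF Γ (.app u v) C
  | allI {Γ : List Ty} {t : Trm} {A : Ty} :
      TypF (Γ.map (liftTy 1 0)) t A → TypF Γ t (.all A)
  | allE {Γ : List Ty} {t : Trm} {A : Ty} (G : Ty) :
      TypF Γ t (.all A) → TypF Γ t (substTy A 0 G)

/-- The typing judgment `Γ ⊢_{F₀} t : A` of system F₀, i.e. system F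
without the rule (∀e). -/
inductive TypF0 : List Ty → Trm → Ty → Prop
  | var (Γ : List Ty) (n : ℕ) (A : Ty) : Γ[n]? = some A → TypF0 Γ (.var n) A
  | abs {Γ : List Ty} {t : Trm} {B C : Ty} :
      TypF0 (B :: Γ) t C → TypF0 Γ (.lam t) (.arr B C)
  | app {Γ : List Ty} {u v : Trm} {B C : Ty} :
      TypF0 Γ u (.arr B C) → TypF0 Γ v B → TypF0 Γ (.app u v) C
  | allI {Γ : List Ty} {t : Trm} {A : Ty} :
      TypF0 (Γ.map (liftTy 1 0)) t A → TypF0 Γ t (.all A)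

/-- The typing judgment `Γ ⊢_S t : A` of the simple type system S,
with rules (ax), (→i), (→e) only. -/
inductive TypS : List Ty → Trm → Ty → Prop
  | var (Γ : List Ty) (n : ℕ) (A : Ty) : Γ[n]? = some A → TypS Γ (.var n) A
  | abs {Γ : List Ty} {t : Trm} {B C : Ty} :
      TypS (B :: Γ) t C → TypS Γ (.lam t) (.arr B C)
  | app {Γ : List Ty} {u v : Trm} {B C : Ty} :
      TypS Γ u (.arr B C) → TypS Γ v B → TypS Γ (.app u v) C

/-- Quantifier-free types (types of the simple type system S). -/
def QFree : Ty → Prop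
  | .var _ => True
  | .const _ => True
  | .arr a b => QFree a ∧ QFree b
  | .all _ => False

/-- An input type : a closed type all of whose normal inhabitants are
typable in system F₀. -/
def IsInputType (E : Ty) : Prop :=
  TyClosed E ∧ ∀ t : Trm, IsNormal t → TypF [] t E → TypF0 [] t E

/-- An output type : a closed type `S` not containing the constant `O` such
that for every normal term `t`, if `α : O ⊢_F t : S` then `α ∉ Fv(t)`. -/
def IsOutputType (S : Ty) : Prop :=
  TyClosed S ∧ ¬ ContainsConst 0 S ∧
    ∀ t : Trm, IsNormal t → TypF [tyO] t S → ¬ FreeIn 0 t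

/-- A syntactical data type : a closed type which is both input and output. -/
def IsSyntacticalDataType (D : Ty) : Prop := IsInputType D ∧ IsOutputType D

mutual
  /-- The ∀⁺ types (positive quantifiers). -/
  inductive PosTy : Ty → Prop
    | var (n : ℕ) : PosTy (.var n)
    | arr {B A : Ty} : NegTy B → PosTy A → PosTy (.arr B A)
    | all {A : Ty} : PosTy A → TyFreeIn 0 A → PosTy (.all A)
  /-- The ∀⁻ types (negative quantifiers). -/
  inductive NegTy : Ty → Prop
    | var (n : ℕ) : NegTy (.var n)
    | arr {B A : Ty} : PosTy B → NegTy A → NegTy (.arr B A)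
end

/-- `EndsInConst c A` : the type `A` ends in the type constant `c`. -/
inductive EndsInConst : ℕ → Ty → Prop
  | base (c : ℕ) : EndsInConst c (.const c)
  | arr {c : ℕ} {A : Ty} (B : Ty) : EndsInConst c A → EndsInConst c (.arr B A)
  | all {c : ℕ} {A : Ty} : EndsInConst c A → EndsInConst c (.all A)

/-- `EndsInVar k A` : the type `A` ends in the type variable `k`
(crossing a quantifier ∀X with X ≠ the variable is allowed). -/
inductive EndsInVar : ℕ → Ty → Prop
  | base (k : ℕ) : EndsInVar k (.var k)
  | arr {k : ℕ} {A : Ty} (B : Ty) : EndsInVar k A → EndsInVar k (.arr B A)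
  | all {k : ℕ} {A : Ty} : EndsInVar (k + 1) A → EndsInVar k (.all A)

/-- The side condition of the restricted rule (∀e)_F : the body `A` of `∀X A`
(the variable X having index `k`) is of the form
`∀X₀(A₁ → ∀X₁(A₂ → … → ∀X_{n-1}(A_n → ∀X_n Y)…))` with `Y = X` or one of the
`A_i` ending in `X`. -/
inductive FFForm : ℕ → Ty → Prop
  | base (k : ℕ) : FFForm k (.var k)
  | all {k : ℕ} {A : Ty} : FFForm (k + 1) A → FFForm k (.all A)
  | arrTail {k : ℕ} {C : Ty} (B : Ty) : FFForm k C → FFForm k (.arr B C)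
  | arrHit {k : ℕ} {B C : Ty} : EndsInVar k B → (∃ j, EndsInVar j C) →
      FFForm k (.arr B C)

/-- The typing judgment of system F_F : system F where the rule (∀e) is
replaced by the restricted rule (∀e)_F. -/
inductive TypFF : List Ty → Trm → Ty → Prop
  | var (Γ : List Ty) (n : ℕ) (A : Ty) : Γ[n]? = some A → TypFF Γ (.var n) A
  | abs {Γ : List Ty} {t : Trm} {B C : Ty} :
      TypFF (B :: Γ) t C → TypFF Γ (.lam t) (.arr B C)
  | app {Γ : List Ty} {u v : Trm} {B C : Ty} :
      TypFF Γ u (.arr B C) → TypFF Γ v B → TypFF Γ (.app u v) C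
  | allI {Γ : List Ty} {t : Trm} {A : Ty} :
      TypFF (Γ.map (liftTy 1 0)) t A → TypFF Γ t (.all A)
  | allE {Γ : List Ty} {t : Trm} {A : Ty} (G : Ty) :
      FFForm 0 A → TypFF Γ t (.all A) → TypFF Γ t (substTy A 0 G)

/-- An output type of system F_F. -/
def IsOutputTypeFF (S : Ty) : Prop :=
  TyClosed S ∧ ¬ ContainsConst 0 S ∧
    ∀ t : Trm, IsNormal t → TypFF [tyO] t S → ¬ FreeIn 0 t

/-- Saturated sets of λ-terms. -/
def Saturated (G : Set Trm) : Prop := ∀ t u : Trm, WHRed t u → u ∈ G → t ∈ G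

/-- `G → G'` on sets of λ-terms. -/
def SetArr (G G' : Set Trm) : Set Trm := {u : Trm | ∀ t ∈ G, Trm.app u t ∈ G'}

/-- Extension of an interpretation by a set for the (de Bruijn) variable 0. -/
def consEnv (G : Set Trm) (I : ℕ → Set Trm) : ℕ → Set Trm
  | 0 => G
  | n + 1 => I n

/-- The value `|A|_I` of a type in an interpretation (`C` interprets the
type constants, `I` the type variables). -/
def TyVal (C : ℕ → Set Trm) : Ty → (ℕ → Set Trm) → Set Trm
  | .var n, I => I n
  | .const c, _ => C c
  | .arr a b, I => SetArr (TyVal C a I) (TyVal C b I)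
  | .all a, I => {t : Trm | ∀ G : Set Trm, Saturated G → t ∈ TyVal C a (consEnv G I)}

/-- `|A|` : the intersection of the values of `A` under all interpretations
by saturated sets. -/
def TyGlobal (A : Ty) : Set Trm :=
  {t : Trm | ∀ C I : ℕ → Set Trm, (∀ c, Saturated (C c)) → (∀ n, Saturated (I n)) →
    t ∈ TyVal C A I}

/-- A data type in Krivine's sense : a closed type `A` with `|A| ≠ ∅` such that
every term of `|A|` β-reduces to a closed term. -/
def IsDataType (A : Ty) : Prop :=
  TyClosed A ∧ TyGlobal A ≠ ∅ ∧
    ∀ t ∈ TyGlobal A, ∃ t' : Trm, BetaRed t t' ∧ TrmClosed t'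

/-- The product type `A ∧ B = ∀X((A → (B → X)) → X)` (X fresh). -/
def tyAnd (A B : Ty) : Ty :=
  .all (.arr (.arr (liftTy 1 0 A) (.arr (liftTy 1 0 B) (.var 0))) (.var 0))

/-- The disjoint sum type `A ∨ B = ∀X((A → X) → ((B → X) → X))` (X fresh). -/
def tyOr (A B : Ty) : Ty :=
  .all (.arr (.arr (liftTy 1 0 A) (.var 0))
    (.arr (.arr (liftTy 1 0 B) (.var 0)) (.var 0)))

/-- The type `LA = ∀X(X → ((A → (X → X)) → X))` of lists of objects of `A`. -/
def tyList (A : Ty) : Ty :=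
  .all (.arr (.var 0)
    (.arr (.arr (liftTy 1 0 A) (.arr (.var 0) (.var 0))) (.var 0)))

/-- Negation `¬A = A → ⊥`. -/
def tyNeg (A : Ty) : Ty := .arr A tyBot

/-- The Gödel translation `A*` : every atomic subformula `R` is replaced
by `¬R`. -/
def godel : Ty → Ty
  | .var n => .arr (.var n) tyBot
  | .const c => .arr (.const c) tyBot
  | .arr a b => .arr (godel a) (godel b)
  | .all a => .all (godel a)

/-- `T` is a storage operator for the pair of types `(E, S)`. -/
def IsStorageOpPair (T : Trm) (E S : Ty) : Prop :=
  TrmClosed T ∧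
    ∀ t : Trm, TypF [] t E →
      ∃ τ τ' : Trm, BetaEq τ τ' ∧ TypF [] τ' S ∧
        ∀ θ : Trm, BetaEq θ t →
          ∀ f : ℕ, ¬ FreeIn f θ → ¬ FreeIn f τ →
            ∃ σ : ℕ → Trm,
              WHRed (.app (.app T θ) (.var f)) (.app (.var f) (msubst σ τ))

/-- `T` is a storage operator for the type `D`. -/
def IsStorageOp (T : Trm) (D : Ty) : Prop := IsStorageOpPair T D D

/-- The term `λx₁…λxₙ.α` (n-fold abstraction over the free variable `α`). -/
def nlam (n a : ℕ) : Trm := Trm.lam^[n] (Trm.var (a + n))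

/-- The term `p_n = λx₁…λxₙλx.x`. -/
def pTrm (n : ℕ) : Trm := Trm.lam^[n] (Trm.lam (Trm.var 0))

/-- `B₁ → … → B_n → A`. -/
def mkArr (Bs : List Ty) (A : Ty) : Ty := Bs.foldr Ty.arr A

/-- The length `Lg(E)` of a type : the number of occurrences of `→` in it. -/
def Lg : Ty → ℕ
  | .var _ => 0
  | .const _ => 0
  | .arr a b => Lg a + Lg b + 1
  | .all a => Lg a

/-- `SubtypeOf A E` : `A` is a subtype (subformula) of `E`. -/
inductive SubtypeOf : Ty → Ty → Prop
  | refl (A : Ty) : SubtypeOf A A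
  | arrL {A B C : Ty} : SubtypeOf A B → SubtypeOf A (.arr B C)
  | arrR {A B C : Ty} : SubtypeOf A C → SubtypeOf A (.arr B C)
  | all {A B : Ty} : SubtypeOf A B → SubtypeOf A (.all B)

/-- `InAppPos k t` : the variable `k` occurs in application (function)
position in `t`, i.e. some subterm of `t` is of the form `(k)u`. -/
def InAppPos : ℕ → Trm → Prop
  | _, .var _ => False
  | k, .app u v => u = .var k ∨ InAppPos k u ∨ InAppPos k v
  | k, .lam u => InAppPos (k + 1) u

/-- The simple translation `A^s` : `X^s = X`, `(B → C)^s = B^s → C^s`,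
`(∀X B)^s = B^s` (the variables freed by erasing the quantifiers are collapsed
onto the type variable `0`). `d` counts the erased quantifiers. -/
def eraseTyAux : ℕ → Ty → Ty
  | d, .var n => .var (n - d)
  | _, .const c => .const c
  | d, .arr a b => .arr (eraseTyAux d a) (eraseTyAux d b)
  | d, .all a => eraseTyAux (d + 1) a

/-- The simple translation `A^s`. -/
def eraseTy : Ty → Ty := eraseTyAux 0

/-- The identity term `λx.x`. -/
def idTrm : Trm := .lam (.var 0)

/-- The boolean `𝟙 = λxλy.x`. -/
def oneTrm : Trm := .lam (.lam (.var 1))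

/-- The pair of λ-terms `(T_F, T'_F)` associated with a type `F` (the
distinguished variable `X` having de Bruijn index `k`; the term variable `α`
is the free term variable `0`):
`T_F = T'_F = λx.x` if `X ∉ Fv(F)`;
`T_X = λxλβλg.(g)xα`, `T'_X = λx.(x)α𝟙`;
`T_{C→D} = λxλy.(T_D)(x)(T'_C)y`, `T'_{C→D} = λxλy.(T'_D)(x)(T_C)y`;
`T_{∀Y B} = λx.(T_B)x`, `T'_{∀Y B} = λx.(T'_B)x`. -/
def TTpair : ℕ → Ty → Trm × Trm
  | k, .var n =>
      if n = k then
        (.lam (.lam (.lam (.app (.app (.var 0) (.var 2)) (.var 3)))),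
         .lam (.app (.app (.var 0) (.var 1)) oneTrm))
      else (idTrm, idTrm)
  | _, .const _ => (idTrm, idTrm)
  | k, .arr C D =>
      if tyFreeInB k (.arr C D) then
        (.lam (.lam (.app (liftTrm 2 0 (TTpair k D).1)
            (.app (.var 1) (.app (liftTrm 2 0 (TTpair k C).2) (.var 0))))),
         .lam (.lam (.app (liftTrm 2 0 (TTpair k D).2)
            (.app (.var 1) (.app (liftTrm 2 0 (TTpair k C).1) (.var 0))))))
      else (idTrm, idTrm)
  | k, .all B =>
      if tyFreeInB k (.all B) then
        (.lam (.app (liftTrm 1 0 (TTpair (k + 1) B).1) (.var 0)),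
         .lam (.app (liftTrm 1 0 (TTpair (k + 1) B).2) (.var 0)))
      else (idTrm, idTrm)

/-!
Each of the three types has the shape `∀X(C₁ → ⋯ → C_r → X)` where every `Cᵢ` is a
constructor type `D₁ → ⋯ → D_k → X` whose arguments `Dⱼ` are `X` or an output type.
Let `t` be normal with `α : O ⊢ t : ∀X(C₁ → ⋯ → C_r → X)`. Instantiating `X` by a fresh
variable and using the generation lemmas of system F, `t = λc₁…λc_r.M` where `M : X` in the
context `c : C, α : O`; as `α : O` cannot produce an `X`, `M` is a spine `(cᵢ) a₁ … a_k` with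
`aⱼ : Dⱼ`. Arguments of type `X` are handled by induction. For an argument `a : S` with `S` an
output type, substitute `O` for `X` and replace every `cᵢ` by the constant function
`λx₁…λx_k.α`, contracting the redexes this creates: the result is a normal term of type `S`
in the context `α : O`, in which `α` is free as soon as it is free in `a`.
-/

/-! ### Lifting and substitution in types -/

theorem liftTy_eq_self_of_lt : ∀ (A : Ty) (d k : ℕ), (∀ i, TyFreeIn i A → i < k) →
    liftTy d k A = A
  | .var n, d, k, h => by simp [liftTy, h n rfl]
  | .const _, _, _, _ => rfl
  | .arr a b, d, k, h => by
      simp [liftTy, liftTy_eq_self_of_lt a d k (fun i hi => h i (.inl hi)),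
        liftTy_eq_self_of_lt b d k (fun i hi => h i (.inr hi))]
  | .all a, d, k, h => by
      refine congrArg Ty.all (liftTy_eq_self_of_lt a d (k + 1) fun i hi => ?_)
      cases i with
      | zero => omega
      | succ j => exact Nat.succ_lt_succ (h j hi)

theorem TyClosed.liftTy_eq {A : Ty} (h : TyClosed A) (d k : ℕ) : liftTy d k A = A :=
  liftTy_eq_self_of_lt A d k fun i hi => absurd hi (h i)

theorem liftTy_zero (k : ℕ) : liftTy 0 k = id := by
  funext A
  induction A generalizing k with
  | var n => by_cases h : n < k <;> simp [liftTy, h]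
  | const _ => rfl
  | arr a b iha ihb => simp [liftTy, iha, ihb]
  | all a ih => simp [liftTy, ih]

theorem liftTy_liftTy_add : ∀ (A : Ty) (a b k : ℕ),
    liftTy a k (liftTy b k A) = liftTy (a + b) k A
  | .var n, a, b, k => by
      by_cases h : n < k
      · simp [liftTy, h]
      · simp [liftTy, h, show ¬ n + b < k by omega]; omega
  | .const _, _, _, _ => rfl
  | .arr x y, a, b, k => by simp [liftTy, liftTy_liftTy_add x, liftTy_liftTy_add y]
  | .all x, a, b, k => by simp [liftTy, liftTy_liftTy_add x]

theorem liftTy_comm : ∀ (A : Ty) (j k : ℕ), j ≤ k →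
    liftTy 1 j (liftTy 1 k A) = liftTy 1 (k + 1) (liftTy 1 j A)
  | .var n, j, k, hjk => by
      by_cases h1 : n < j
      · simp [liftTy, h1, show n < k by omega, show n < k + 1 by omega]
      · by_cases h2 : n < k
        · simp [liftTy, h1, h2]
        · simp [liftTy, h1, h2, show ¬ n + 1 < j by omega]
  | .const _, _, _, _ => rfl
  | .arr x y, j, k, h => by simp [liftTy, liftTy_comm x j k h, liftTy_comm y j k h]
  | .all x, j, k, h => by simp [liftTy, liftTy_comm x (j + 1) (k + 1) (by omega)]

theorem liftTy_one_liftTy : ∀ (A : Ty) (i j k : ℕ), j ≤ k → k ≤ i + j →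
    liftTy 1 k (liftTy i j A) = liftTy (i + 1) j A
  | .var n, i, j, k, h1, h2 => by
      by_cases h : n < j
      · simp [liftTy, h, show n < k by omega]
      · simp [liftTy, h, show ¬ n + i < k by omega]; omega
  | .const _, _, _, _, _, _ => rfl
  | .arr x y, i, j, k, h1, h2 => by
      simp [liftTy, liftTy_one_liftTy x i j k h1 h2, liftTy_one_liftTy y i j k h1 h2]
  | .all x, i, j, k, h1, h2 => by
      simp [liftTy, liftTy_one_liftTy x i (j + 1) (k + 1) (by omega) (by omega)]

def liftSubTy (σ : ℕ → Ty) : ℕ → Ty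
  | 0 => .var 0
  | n + 1 => liftTy 1 0 (σ n)

def msubstTy (σ : ℕ → Ty) : Ty → Ty
  | .var n => σ n
  | .const c => .const c
  | .arr a b => .arr (msubstTy σ a) (msubstTy σ b)
  | .all a => .all (msubstTy (liftSubTy σ) a)

theorem msubstTy_eq_self : ∀ (A : Ty) (σ : ℕ → Ty), (∀ n, TyFreeIn n A → σ n = .var n) →
    msubstTy σ A = A
  | .var n, σ, h => h n rfl
  | .const _, _, _ => rfl
  | .arr a b, σ, h => by
      simp [msubstTy, msubstTy_eq_self a σ (fun n hn => h n (.inl hn)),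
        msubstTy_eq_self b σ (fun n hn => h n (.inr hn))]
  | .all a, σ, h => by
      refine congrArg Ty.all (msubstTy_eq_self a _ fun n hn => ?_)
      cases n with
      | zero => rfl
      | succ m => simp [liftSubTy, h m hn, liftTy]

theorem msubstTy_var (A : Ty) : msubstTy .var A = A :=
  msubstTy_eq_self A _ fun _ _ => rfl

theorem TyClosed.msubstTy_eq {A : Ty} (h : TyClosed A) (σ : ℕ → Ty) : msubstTy σ A = A :=
  msubstTy_eq_self A σ fun n hn => absurd hn (h n)

theorem msubstTy_liftTy : ∀ (A : Ty) (d k : ℕ) (σ τ : ℕ → Ty),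
    (∀ n, σ (if n < k then n else n + d) = τ n) → msubstTy σ (liftTy d k A) = msubstTy τ A
  | .var n, d, k, σ, τ, h => by
      by_cases hn : n < k <;> simpa [liftTy, msubstTy, hn] using h n
  | .const _, _, _, _, _, _ => rfl
  | .arr a b, d, k, σ, τ, h => by
      simp [liftTy, msubstTy, msubstTy_liftTy a d k σ τ h, msubstTy_liftTy b d k σ τ h]
  | .all a, d, k, σ, τ, h => by
      refine congrArg Ty.all (msubstTy_liftTy a d (k + 1) _ _ fun n => ?_)
      cases n with
      | zero => rfl
      | succ m =>
          change liftSubTy σ (if m + 1 < k + 1 then m + 1 else m + 1 + d) = liftTy 1 0 (τ m)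
          by_cases hm : m < k
          · simp [liftSubTy, ← h m, hm]
          · simp [liftSubTy, ← h m, hm, show m + 1 + d = m + d + 1 by omega]

theorem msubstTy_liftTy_eq_self {σ : ℕ → Ty} {m : ℕ} (hσ : ∀ j, σ (j + m) = .var j)
    (A : Ty) : msubstTy σ (liftTy m 0 A) = A := by
  rw [msubstTy_liftTy A m 0 σ .var (by simpa using hσ), msubstTy_var]

theorem iterate_liftSubTy_of_lt (σ : ℕ → Ty) : ∀ k n, n < k → liftSubTy^[k] σ n = .var n
  | k + 1, 0, _ => by rw [Function.iterate_succ_apply']; rfl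
  | k + 1, n + 1, h => by
      rw [Function.iterate_succ_apply']
      simp [liftSubTy, iterate_liftSubTy_of_lt σ k n (by omega), liftTy]

theorem liftSubTy_iterate_liftSubTy (σ : ℕ → Ty) : ∀ k n, k ≤ n →
    liftSubTy (liftSubTy^[k] σ) (n + 1) = liftTy 1 k (liftSubTy^[k] σ n)
  | 0, _, _ => rfl
  | k + 1, n + 1, h => by
      rw [Function.iterate_succ_apply']
      change liftTy 1 0 (liftSubTy (liftSubTy^[k] σ) (n + 1)) = liftTy 1 (k + 1) (liftTy 1 0 _)
      rw [liftSubTy_iterate_liftSubTy σ k n (by omega), ← liftTy_comm _ 0 k (by omega)]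

theorem msubstTy_iterate_liftSubTy_liftTy : ∀ (A : Ty) (k : ℕ) (σ : ℕ → Ty),
    msubstTy (liftSubTy (liftSubTy^[k] σ)) (liftTy 1 k A) =
      liftTy 1 k (msubstTy (liftSubTy^[k] σ) A)
  | .var n, k, σ => by
      by_cases h : n < k
      · have := iterate_liftSubTy_of_lt σ (k + 1) n (by omega)
        rw [Function.iterate_succ_apply'] at this
        simp [liftTy, h, msubstTy, this, iterate_liftSubTy_of_lt σ k n h]
      · simpa [liftTy, h, msubstTy] using liftSubTy_iterate_liftSubTy σ k n (by omega)
  | .const _, _, _ => rfl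
  | .arr a b, k, σ => by
      simp only [liftTy, msubstTy, msubstTy_iterate_liftSubTy_liftTy a,
        msubstTy_iterate_liftSubTy_liftTy b]
  | .all a, k, σ => by
      have := msubstTy_iterate_liftSubTy_liftTy a (k + 1) σ
      rw [Function.iterate_succ_apply'] at this
      exact congrArg Ty.all this

theorem msubstTy_liftSubTy_liftTy (A : Ty) (σ : ℕ → Ty) :
    msubstTy (liftSubTy σ) (liftTy 1 0 A) = liftTy 1 0 (msubstTy σ A) :=
  msubstTy_iterate_liftSubTy_liftTy A 0 σ

theorem liftSubTy_msubstTy (σ τ : ℕ → Ty) :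
    liftSubTy (fun n => msubstTy σ (τ n)) = fun n => msubstTy (liftSubTy σ) (liftSubTy τ n) := by
  funext n
  cases n with
  | zero => rfl
  | succ m => exact (msubstTy_liftSubTy_liftTy (τ m) σ).symm

theorem msubstTy_msubstTy : ∀ (A : Ty) (σ τ : ℕ → Ty),
    msubstTy σ (msubstTy τ A) = msubstTy (fun n => msubstTy σ (τ n)) A
  | .var _, _, _ => rfl
  | .const _, _, _ => rfl
  | .arr a b, σ, τ => by simp [msubstTy, msubstTy_msubstTy a, msubstTy_msubstTy b]
  | .all a, σ, τ => by
      simp only [msubstTy, msubstTy_msubstTy a, liftSubTy_msubstTy]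

def singleSubTy (k : ℕ) (G : Ty) (n : ℕ) : Ty :=
  if n < k then .var n else if n = k then liftTy k 0 G else .var (n - 1)

theorem liftSubTy_singleSubTy (k : ℕ) (G : Ty) :
    liftSubTy (singleSubTy k G) = singleSubTy (k + 1) G := by
  funext n
  cases n with
  | zero => simp [liftSubTy, singleSubTy]
  | succ m =>
      rcases Nat.lt_trichotomy m k with h | rfl | h
      · simp [liftSubTy, singleSubTy, h, liftTy]
      · simpa [liftSubTy, singleSubTy] using liftTy_one_liftTy G m 0 0 le_rfl (by omega)
      · simp [liftSubTy, singleSubTy, show ¬ m < k by omega, show m ≠ k by omega, liftTy]; omega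

theorem substTy_eq_msubstTy : ∀ (A : Ty) (k : ℕ) (G : Ty),
    substTy A k G = msubstTy (singleSubTy k G) A
  | .var _, _, _ => rfl
  | .const _, _, _ => rfl
  | .arr a b, k, G => by simp [substTy, msubstTy, substTy_eq_msubstTy a, substTy_eq_msubstTy b]
  | .all a, k, G => by simp [substTy, msubstTy, substTy_eq_msubstTy a, liftSubTy_singleSubTy]

theorem msubstTy_singleSubTy_liftTy : ∀ (A : Ty) (k : ℕ) (G : Ty),
    msubstTy (singleSubTy k G) (liftTy 1 k A) = A
  | .var n, k, G => by
      by_cases h : n < k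
      · simp [liftTy, h, msubstTy, singleSubTy]
      · simp [liftTy, h, msubstTy, singleSubTy, show ¬ n + 1 < k by omega, show n + 1 ≠ k by omega]
  | .const _, _, _ => rfl
  | .arr a b, k, G => by
      simp [liftTy, msubstTy, msubstTy_singleSubTy_liftTy a, msubstTy_singleSubTy_liftTy b]
  | .all a, k, G => by simp [liftTy, msubstTy, liftSubTy_singleSubTy, msubstTy_singleSubTy_liftTy a]

theorem msubstTy_substTy (A : Ty) (σ : ℕ → Ty) (G : Ty) :
    msubstTy σ (substTy A 0 G) = substTy (msubstTy (liftSubTy σ) A) 0 (msubstTy σ G) := by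
  simp only [substTy_eq_msubstTy, msubstTy_msubstTy]
  congr 1
  funext n
  cases n with
  | zero => simp [singleSubTy, msubstTy, liftSubTy, liftTy_zero]
  | succ m => simp [singleSubTy, msubstTy, liftSubTy, msubstTy_singleSubTy_liftTy]

theorem substTy_msubstTy (A : Ty) (σ : ℕ → Ty) (i : ℕ) (G : Ty) :
    substTy (msubstTy σ A) i G = msubstTy (fun n => substTy (σ n) i G) A := by
  simp only [substTy_eq_msubstTy, msubstTy_msubstTy]

/-! ### Generation lemmas -/

theorem typF_msubstTy {Γ : List Ty} {t : Trm} {C : Ty} (h : TypF Γ t C) (σ : ℕ → Ty) :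
    TypF (Γ.map (msubstTy σ)) t (msubstTy σ C) := by
  induction h generalizing σ with
  | var Γ n A hA => exact .var _ n _ (by simp [hA])
  | abs _ ih => exact .abs (ih σ)
  | app _ _ ih₁ ih₂ => exact .app (ih₁ σ) (ih₂ σ)
  | @allI Γ t A _ ih =>
      refine .allI ?_
      have hctx : (Γ.map (liftTy 1 0)).map (msubstTy (liftSubTy σ)) =
          (Γ.map (msubstTy σ)).map (liftTy 1 0) := by
        simp [msubstTy_liftSubTy_liftTy]
      simpa [hctx] using ih (liftSubTy σ)
  | allE G _ ih => simpa [msubstTy_substTy] using TypF.allE (msubstTy σ G) (ih σ)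

def Ty.IsAll : Ty → Prop
  | .all _ => True
  | _ => False

theorem Ty.isAll_msubstTy_iff {σ : ℕ → Ty} : ∀ {A : Ty}, (∀ n, ¬ (σ n).IsAll) →
    ((msubstTy σ A).IsAll ↔ A.IsAll)
  | .var n, hσ => by simpa [msubstTy, Ty.IsAll] using hσ n
  | .const _, _ => Iff.rfl
  | .arr _ _, _ => Iff.rfl
  | .all _, _ => Iff.rfl

def alls : ℕ → Ty → Ty
  | 0, T => T
  | k + 1, T => .all (alls k T)

theorem substTy_alls : ∀ (k : ℕ) (T : Ty) (i : ℕ) (G : Ty),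
    substTy (alls k T) i G = alls k (substTy T (i + k) G)
  | 0, _, _, _ => rfl
  | k + 1, T, i, G => by
      simp [alls, substTy, substTy_alls k T (i + 1) G, show i + 1 + k = i + (k + 1) by omega]

/-- `ForallChain m Q C`: `C` is reached from `Q` by (∀i) and (∀e) steps, `m` of them (∀i). -/
inductive ForallChain : ℕ → Ty → Ty → Prop
  | refl (Q : Ty) : ForallChain 0 Q Q
  | allI {m : ℕ} {Q C : Ty} : ForallChain m Q C → ForallChain (m + 1) Q (.all C)
  | allE {m : ℕ} {Q C : Ty} (G : Ty) : ForallChain m Q (.all C) → ForallChain m Q (substTy C 0 G)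

theorem ForallChain.exists_msubstTy {m : ℕ} {Q C : Ty} (h : ForallChain m Q C) (hQ : ¬ Q.IsAll) :
    ∃ k σ, (∀ j, σ (j + m) = .var (j + k)) ∧ C = alls k (msubstTy σ Q) := by
  induction h with
  | refl Q => exact ⟨0, .var, fun _ => rfl, (msubstTy_var Q).symm⟩
  | @allI m Q C _ ih =>
      obtain ⟨k, σ, hσ, rfl⟩ := ih hQ
      exact ⟨k + 1, σ, fun j => by rw [← Nat.add_assoc, Nat.add_right_comm, hσ]; congr 1; omega,
        rfl⟩
  | @allE m Q C G _ ih =>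
      obtain ⟨k, σ, hσ, hC⟩ := ih hQ
      cases k with
      | succ k =>
          refine ⟨k, fun n => substTy (σ n) k G, fun j => ?_, ?_⟩
          · simp [hσ, substTy, show ¬ j + (k + 1) < k by omega, show j + (k + 1) ≠ k by omega]
          · cases hC
            simp [substTy_alls, substTy_msubstTy]
      | zero =>
          -- `σ Q` is a quantifier although `Q` is not: `Q` is a variable bound inside the chain
          obtain ⟨n, rfl⟩ : ∃ n, Q = .var n := by
            cases Q <;> first | exact ⟨_, rfl⟩ | exact (hQ trivial).elim | cases hC
          have hn : n < m := by
            by_contra hn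
            obtain ⟨j, rfl⟩ := Nat.exists_eq_add_of_le (Nat.le_of_not_lt hn)
            have := hσ j
            simp only [alls, msubstTy] at hC
            rw [Nat.add_comm m j, this] at hC
            cases hC
          refine ⟨0, Function.update σ n (substTy C 0 G), fun j => ?_, ?_⟩
          · rw [Function.update_of_ne (by omega), hσ]
          · simp only [alls, msubstTy] at hC ⊢
            rw [Function.update_self]

/-- Typing whose last rule is (ax), (→i) or (→e). -/
def TypFCore (Γ : List Ty) : Trm → Ty → Prop
  | .var n, C => Γ[n]? = some C
  | .lam b, C => ∃ P Q, C = .arr P Q ∧ TypF (P :: Γ) b Q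
  | .app u v, C => ∃ P, TypF Γ u (.arr P C) ∧ TypF Γ v P

theorem TypF.exists_typFCore_forallChain {Γ : List Ty} {t : Trm} {C : Ty} (h : TypF Γ t C) :
    ∃ m C₀, TypFCore (Γ.map (liftTy m 0)) t C₀ ∧ ForallChain m C₀ C := by
  induction h with
  | var Γ n A hA => exact ⟨0, A, by simpa [TypFCore, liftTy_zero] using hA, .refl A⟩
  | @abs Γ t B C h _ =>
      exact ⟨0, _, ⟨B, C, rfl, by simpa [liftTy_zero] using h⟩, .refl _⟩
  | @app Γ u v B C h₁ h₂ _ _ =>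
      exact ⟨0, C, ⟨B, by simpa [liftTy_zero] using h₁, by simpa [liftTy_zero] using h₂⟩, .refl C⟩
  | allI _ ih =>
      obtain ⟨m, C₀, hcore, hr⟩ := ih
      refine ⟨m + 1, C₀, ?_, hr.allI⟩
      simpa [Function.comp_def, liftTy_liftTy_add, Nat.add_comm] using hcore
  | allE G _ ih =>
      obtain ⟨m, C₀, hcore, hr⟩ := ih
      exact ⟨m, C₀, hcore, hr.allE G⟩

theorem TypFCore.unlift {Γ : List Ty} {t : Trm} {C : Ty} {m : ℕ} {σ : ℕ → Ty}
    (h : TypFCore (Γ.map (liftTy m 0)) t C) (hσ : ∀ j, σ (j + m) = .var j) :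
    TypFCore Γ t (msubstTy σ C) := by
  have hΓ : (Γ.map (liftTy m 0)).map (msubstTy σ) = Γ := by
    simp [Function.comp_def, msubstTy_liftTy_eq_self hσ]
  cases t with
  | var n =>
      simp only [TypFCore, List.getElem?_map] at h ⊢
      obtain ⟨T, hT, rfl⟩ := Option.map_eq_some_iff.mp h
      simp [hT, msubstTy_liftTy_eq_self hσ]
  | lam b =>
      obtain ⟨P, Q, rfl, hb⟩ := h
      exact ⟨_, _, rfl, by simpa [hΓ] using typF_msubstTy hb σ⟩
  | app u v =>
      obtain ⟨P, hu, hv⟩ := h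
      exact ⟨_, by simpa [hΓ, msubstTy] using typF_msubstTy hu σ,
        by simpa [hΓ] using typF_msubstTy hv σ⟩

/-- The (∀i) and (∀e) steps after the last core rule amount to a type substitution
(`ForallChain.exists_msubstTy`), under which the core rule can be replayed in `Γ` itself. -/
theorem TypF.exists_typFCore {Γ : List Ty} {t : Trm} {C : Ty} (h : TypF Γ t C)
    (hC : ¬ C.IsAll) : ∃ C₀, TypFCore Γ t C₀ ∧ (C₀.IsAll ∨ C₀ = C) := by
  obtain ⟨m, C₀, hcore, hr⟩ := h.exists_typFCore_forallChain
  by_cases hC₀ : C₀.IsAll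
  · refine ⟨_, hcore.unlift (σ := fun j => .var (j - m)) (by simp), .inl ?_⟩
    rwa [Ty.isAll_msubstTy_iff fun _ => id]
  · obtain ⟨k, σ, hσ, rfl⟩ := hr.exists_msubstTy hC₀
    cases k with
    | zero => exact ⟨_, hcore.unlift hσ, .inr rfl⟩
    | succ k => exact (hC trivial).elim

theorem TypF.var_inv {Γ : List Ty} {n : ℕ} {C : Ty} (h : TypF Γ (.var n) C) (hC : ¬ C.IsAll)
    (hΓ : ∀ T, Γ[n]? = some T → ¬ T.IsAll) : Γ[n]? = some C := by
  obtain ⟨C₀, hC₀, hC₀C | rfl⟩ := h.exists_typFCore hC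
  · exact (hΓ C₀ hC₀ hC₀C).elim
  · exact hC₀

theorem TypF.lam_inv {Γ : List Ty} {b : Trm} {C : Ty} (h : TypF Γ (.lam b) C) (hC : ¬ C.IsAll) :
    ∃ P Q, C = .arr P Q ∧ TypF (P :: Γ) b Q := by
  obtain ⟨C₀, ⟨P, Q, rfl, hb⟩, hall | rfl⟩ := h.exists_typFCore hC
  · exact hall.elim
  · exact ⟨P, Q, rfl, hb⟩

theorem TypF.app_inv {Γ : List Ty} {u v : Trm} {C : Ty} (h : TypF Γ (.app u v) C)
    (hC : ¬ C.IsAll) : ∃ P Q, TypF Γ u (.arr P Q) ∧ TypF Γ v P ∧ (Q.IsAll ∨ Q = C) := by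
  obtain ⟨Q, ⟨P, hu, hv⟩, hQ⟩ := h.exists_typFCore hC
  exact ⟨P, Q, hu, hv, hQ⟩

/-! ### Normal terms and their spines -/

theorem isNormal_var (n : ℕ) : IsNormal (.var n) := fun _ h => nomatch h

theorem isNormal_lam_iff {b : Trm} : IsNormal (.lam b) ↔ IsNormal b :=
  ⟨fun h u hs => h _ (.lam hs), fun h u hs => by cases hs with | lam hs => exact h _ hs⟩

theorem isNormal_app_iff {u v : Trm} :
    IsNormal (.app u v) ↔ IsNormal u ∧ IsNormal v ∧ ∀ b, u ≠ .lam b := by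
  refine ⟨fun h => ⟨fun w hw => h _ (.appL v hw), fun w hw => h _ (.appR u hw), ?_⟩, ?_⟩
  · rintro b rfl
    exact h _ (.beta b v)
  · rintro ⟨hu, hv, hlam⟩ w hw
    cases hw with
    | beta b _ => exact hlam b rfl
    | appL _ hs => exact hu _ hs
    | appR _ hs => exact hv _ hs

def Trm.spineHead : Trm → Option ℕ
  | .var n => some n
  | .app u _ => u.spineHead
  | .lam _ => none

def Trm.spineArgs : Trm → List Trm
  | .app u v => u.spineArgs ++ [v]
  | _ => []

theorem IsNormal.exists_spineHead : ∀ {t : Trm}, IsNormal t → (∀ b, t ≠ .lam b) →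
    ∃ n, t.spineHead = some n
  | .var n, _, _ => ⟨n, rfl⟩
  | .lam b, _, h => (h b rfl).elim
  | .app _ _, h, _ =>
      have ⟨hu, _, hlam⟩ := isNormal_app_iff.mp h
      hu.exists_spineHead hlam

theorem IsNormal.of_mem_spineArgs : ∀ {t a : Trm}, IsNormal t → a ∈ t.spineArgs → IsNormal a
  | .var _, _, _, ha => by simp [Trm.spineArgs] at ha
  | .lam _, _, _, ha => by simp [Trm.spineArgs] at ha
  | .app _ _, a, h, ha => by
      obtain ⟨hu, hv, -⟩ := isNormal_app_iff.mp h
      rcases List.mem_append.mp ha with ha | ha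
      · exact hu.of_mem_spineArgs ha
      · rwa [List.mem_singleton.mp ha]

theorem sizeOf_lt_of_mem_spineArgs : ∀ {t a : Trm}, a ∈ t.spineArgs → sizeOf a < sizeOf t
  | .var _, _, ha => by simp [Trm.spineArgs] at ha
  | .lam _, _, ha => by simp [Trm.spineArgs] at ha
  | .app u v, a, ha => by
      rcases List.mem_append.mp ha with ha | ha
      · have := sizeOf_lt_of_mem_spineArgs ha
        simp only [Trm.app.sizeOf_spec]
        omega
      · simp [List.mem_singleton.mp ha]

theorem freeIn_of_spineHead {k n : ℕ} : ∀ {t : Trm}, t.spineHead = some n → FreeIn k t →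
    n = k ∨ ∃ a ∈ t.spineArgs, FreeIn k a
  | .var m, hn, hk => by cases hn; exact .inl hk
  | .lam _, hn, _ => by cases hn
  | .app u v, hn, hk => by
      rcases hk with hk | hk
      · rcases freeIn_of_spineHead (t := u) hn hk with h | ⟨a, ha, hka⟩
        · exact .inl h
        · exact .inr ⟨a, List.mem_append_left _ ha, hka⟩
      · exact .inr ⟨v, by simp [Trm.spineArgs], hk⟩

theorem mkArr_append (Ds Es : List Ty) (R : Ty) : mkArr (Ds ++ Es) R = mkArr Ds (mkArr Es R) :=
  List.foldr_append

theorem eq_append_of_mkArr_eq_mkArr {R C : Ty} (hR : ∀ P Q, R ≠ .arr P Q) :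
    ∀ {Es Ds : List Ty}, mkArr Es R = mkArr Ds C → ∃ Fs, Es = Ds ++ Fs ∧ C = mkArr Fs R
  | Es, [], h => ⟨Es, rfl, h.symm⟩
  | [], D :: Ds, h => (hR _ _ h).elim
  | E :: Es, D :: Ds, h => by
      simp only [mkArr, List.foldr_cons, Ty.arr.injEq] at h
      obtain ⟨Fs, rfl, rfl⟩ := eq_append_of_mkArr_eq_mkArr hR h.2
      exact ⟨Fs, by rw [h.1]; rfl, rfl⟩

def EndsInAtom : Ty → Prop
  | .var _ => True
  | .const _ => True
  | .arr _ B => EndsInAtom B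
  | .all _ => False

theorem EndsInAtom.not_isAll : ∀ {T : Ty}, EndsInAtom T → ¬ T.IsAll
  | .var _, _ => id
  | .const _, _ => id
  | .arr _ _, _ => id

theorem endsInAtom_mkArr {R : Ty} : ∀ {Ds : List Ty}, EndsInAtom (mkArr Ds R) ↔ EndsInAtom R
  | [] => Iff.rfl
  | _ :: Ds => endsInAtom_mkArr (Ds := Ds)

theorem _root_.List.Forall₂.exists_of_mem_left {α β : Type*} {R : α → β → Prop} {l₁ : List α}
    {l₂ : List β} (h : List.Forall₂ R l₁ l₂) {a : α} (ha : a ∈ l₁) : ∃ b ∈ l₂, R a b := by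
  induction h with
  | nil => cases ha
  | cons hab _ ih =>
      rcases List.mem_cons.mp ha with rfl | ha
      · exact ⟨_, List.mem_cons_self, hab⟩
      · obtain ⟨b, hb, hab'⟩ := ih ha
        exact ⟨b, List.mem_cons_of_mem _ hb, hab'⟩

theorem TypF.spine {Γ : List Ty} {C : Ty} {n : ℕ} (hΓ : ∀ T, Γ[n]? = some T → EndsInAtom T) :
    ∀ {t : Trm}, TypF Γ t C → ¬ C.IsAll → t.spineHead = some n →
      ∃ Ds, Γ[n]? = some (mkArr Ds C) ∧ List.Forall₂ (TypF Γ) t.spineArgs Ds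
  | .var m, h, hC, hn => by
      cases hn
      exact ⟨[], h.var_inv hC fun T hT => (hΓ T hT).not_isAll, .nil⟩
  | .lam _, _, _, hn => by cases hn
  | .app u v, h, hC, hn => by
      obtain ⟨P, Q, hu, hv, hQ⟩ := h.app_inv hC
      obtain ⟨Ds, hΓn, hargs⟩ := TypF.spine hΓ hu id hn
      have hPQ : EndsInAtom (.arr P Q) := endsInAtom_mkArr.mp (hΓ _ hΓn)
      obtain rfl : Q = C := hQ.resolve_left (EndsInAtom.not_isAll hPQ)
      exact ⟨Ds ++ [P], by rwa [mkArr_append], List.rel_append hargs (.cons hv .nil)⟩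

/-! ### Eliminating a variable in favour of a constant function -/

theorem tyFreeIn_mkArr {k : ℕ} {R : Ty} : ∀ {Ds : List Ty},
    TyFreeIn k (mkArr Ds R) ↔ (∃ D ∈ Ds, TyFreeIn k D) ∨ TyFreeIn k R
  | [] => by simp [mkArr]
  | D :: Ds => by
      change TyFreeIn k D ∨ TyFreeIn k (mkArr Ds R) ↔ _
      rw [tyFreeIn_mkArr]
      simp [or_assoc]

theorem tyClosed_tyO : TyClosed tyO := fun _ => nofun

theorem TyClosed.mkArr_tyO {Ds : List Ty} (h : ∀ D ∈ Ds, TyClosed D) : TyClosed (mkArr Ds tyO) :=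
  fun k hk => by
    rcases tyFreeIn_mkArr.mp hk with ⟨D, hD, hk⟩ | hk
    exacts [h D hD k hk, hk]

theorem nlam_succ (n a : ℕ) : nlam (n + 1) a = .lam (nlam n (a + 1)) := by
  simp only [nlam, Function.iterate_succ_apply']
  congr 3
  omega

theorem isNormal_nlam : ∀ (n a : ℕ), IsNormal (nlam n a)
  | 0, a => isNormal_var a
  | n + 1, a => by rw [nlam_succ]; exact isNormal_lam_iff.mpr (isNormal_nlam n (a + 1))

theorem freeIn_nlam : ∀ (n a : ℕ), FreeIn a (nlam n a)
  | 0, _ => rfl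
  | n + 1, a => by rw [nlam_succ]; exact freeIn_nlam n (a + 1)

theorem typF_nlam (Γ₀ : List Ty) : ∀ (Ds Δ : List Ty),
    TypF (Δ ++ tyO :: Γ₀) (nlam Ds.length Δ.length) (mkArr Ds tyO)
  | [], Δ => .var _ _ _ (by simp [mkArr])
  | D :: Ds, Δ => by
      rw [List.length_cons, nlam_succ]
      exact .abs (typF_nlam Γ₀ Ds (D :: Δ))

/-- `substNlam d f t` substitutes `nlam d f = λx₁…λx_d.α`, where `α` is the variable `f + 1`,
for the variable `f` of `t`, contracting on the spot the redexes this creates. -/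
def substNlam (d : ℕ) : ℕ → Trm → Trm
  | f, .var n => if n < f then .var n else if n = f then nlam d f else .var (n - 1)
  | f, .lam u => .lam (substNlam d (f + 1) u)
  | f, .app u v =>
      if u.spineHead = some f ∧ u.spineArgs.length < d then nlam (d - u.spineArgs.length - 1) f
      else .app (substNlam d f u) (substNlam d f v)

theorem substNlam_ne_lam {d f : ℕ} {t : Trm} (ht : ∀ b, t ≠ .lam b)
    (hf : ¬ (t.spineHead = some f ∧ t.spineArgs.length < d)) (b : Trm) :
    substNlam d f t ≠ .lam b := by
  cases t with
  | var n =>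
      have hd : n = f → d = 0 := by
        simpa [Trm.spineHead, Trm.spineArgs, Nat.pos_iff_ne_zero] using hf
      simp only [substNlam]
      split_ifs with h₁ h₂
      · simp
      · simp [hd h₂, nlam]
      · simp
  | lam u => exact (ht u rfl).elim
  | app u v =>
      simp only [substNlam]
      split_ifs with h
      · have hlen : ¬ u.spineArgs.length + 1 < d := fun hlt =>
          hf ⟨h.1, by simpa [Trm.spineArgs] using hlt⟩
        rw [show d - u.spineArgs.length - 1 = 0 by omega]
        simp [nlam]
      · simp

theorem IsNormal.substNlam {d : ℕ} : ∀ {f : ℕ} {t : Trm}, IsNormal t → IsNormal (substNlam d f t)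
  | f, .var n, _ => by
      simp only [FarkhNour.substNlam]
      split_ifs
      exacts [isNormal_var _, isNormal_nlam _ _, isNormal_var _]
  | f, .lam u, h => isNormal_lam_iff.mpr (isNormal_lam_iff.mp h).substNlam
  | f, .app u v, h => by
      obtain ⟨hu, hv, hlam⟩ := isNormal_app_iff.mp h
      simp only [FarkhNour.substNlam]
      split_ifs with hf
      · exact isNormal_nlam _ _
      · exact isNormal_app_iff.mpr ⟨hu.substNlam, hv.substNlam, substNlam_ne_lam hlam hf⟩

theorem freeIn_substNlam {d : ℕ} : ∀ {f : ℕ} {t : Trm}, FreeIn (f + 1) t →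
    FreeIn f (substNlam d f t)
  | f, .var n, h => by
      change n = f + 1 at h
      subst h
      simp [substNlam, FreeIn]
  | f, .lam u, h => freeIn_substNlam (t := u) h
  | f, .app u v, h => by
      simp only [substNlam]
      split_ifs
      · exact freeIn_nlam _ _
      · exact h.imp freeIn_substNlam freeIn_substNlam

theorem TypF.substNlam {Γ : List Ty} {t : Trm} {C : Ty} (h : TypF Γ t C) {Ds : List Ty}
    (hDs : ∀ D ∈ Ds, TyClosed D) :
    ∀ {Δ Γ₀ : List Ty}, Γ = Δ ++ mkArr Ds tyO :: tyO :: Γ₀ →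
      TypF (Δ ++ tyO :: Γ₀) (substNlam Ds.length Δ.length t) C := by
  induction h with
  | var Γ n A hA =>
      rintro Δ Γ₀ rfl
      simp only [FarkhNour.substNlam]
      rcases Nat.lt_trichotomy n Δ.length with hn | rfl | hn
      · rw [if_pos hn]
        exact .var _ _ _ (by rwa [List.getElem?_append_left hn] at hA ⊢)
      · obtain rfl : mkArr Ds tyO = A := by simpa using hA
        simpa using typF_nlam Γ₀ Ds Δ
      · obtain ⟨j, rfl⟩ := Nat.exists_eq_add_of_lt hn
        rw [if_neg (by omega), if_neg (by omega)]
        refine .var _ _ _ ?_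
        rw [List.getElem?_append_right (by omega)] at hA ⊢
        simpa [show Δ.length + j + 1 - Δ.length = j + 1 by omega,
          show Δ.length + j + 1 - 1 - Δ.length = j by omega] using hA
  | abs _ ih =>
      rintro Δ Γ₀ rfl
      exact .abs (ih (Δ := _ :: Δ) rfl)
  | @app Γ u v B C h₁ _ ih₁ ih₂ =>
      rintro Δ Γ₀ rfl
      simp only [FarkhNour.substNlam]
      split_ifs with hf
      · have hhead : (Δ ++ mkArr Ds tyO :: tyO :: Γ₀)[Δ.length]? = some (mkArr Ds tyO) := by simp
        obtain ⟨Es, hEs, hargs⟩ := h₁.spine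
          (fun T hT => by rw [hhead] at hT; cases hT; exact endsInAtom_mkArr.mpr trivial) id hf.1
        rw [hhead, Option.some.injEq, show Ty.arr B C = mkArr [B] C from rfl, ← mkArr_append] at hEs
        obtain ⟨Fs, rfl, rfl⟩ := eq_append_of_mkArr_eq_mkArr (fun _ _ => by simp [tyO]) hEs
        have hlen : (Es ++ [B] ++ Fs).length - u.spineArgs.length - 1 = Fs.length := by
          simp [hargs.length_eq]
        rw [hlen]
        exact typF_nlam Γ₀ Fs Δ
      · exact .app (ih₁ rfl) (ih₂ rfl)
  | @allI Γ t A _ ih =>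
      rintro Δ Γ₀ rfl
      have hfix : ∀ T, TyClosed T → liftTy 1 0 T = T := fun T hT => hT.liftTy_eq 1 0
      refine .allI ?_
      simpa [hfix _ tyClosed_tyO] using ih (Δ := Δ.map (liftTy 1 0)) (Γ₀ := Γ₀.map (liftTy 1 0))
        (by simp [hfix _ (.mkArr_tyO hDs), hfix _ tyClosed_tyO])
  | allE G _ ih =>
      rintro Δ Γ₀ rfl
      exact .allE G (ih rfl)

theorem IsOutputType.not_freeIn_of_typF {S : Ty} (hS : IsOutputType S) {Γ : List Ty}
    (hΓ : ∀ T ∈ Γ, ∃ Ds, T = mkArr Ds tyO ∧ ∀ D ∈ Ds, TyClosed D) {t : Trm} (ht : IsNormal t)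
    (h : TypF (Γ ++ [tyO]) t S) : ¬ FreeIn Γ.length t := by
  induction Γ using List.reverseRecOn generalizing t with
  | nil => exact hS.2.2 t ht h
  | append_singleton Γ T ih =>
      obtain ⟨Ds, rfl, hDs⟩ := hΓ T (by simp)
      intro hfree
      refine ih (fun T hT => hΓ T (by simp [hT])) ht.substNlam (h.substNlam hDs (by simp)) ?_
      exact freeIn_substNlam (by simpa using hfree)

def IsConstructorTy (x : ℕ) (T : Ty) : Prop :=
  ∃ Ds, T = mkArr Ds (.var x) ∧ ∀ D ∈ Ds, D = .var x ∨ IsOutputType D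

theorem msubstTy_mkArr (σ : ℕ → Ty) (R : Ty) : ∀ Ds : List Ty,
    msubstTy σ (mkArr Ds R) = mkArr (Ds.map (msubstTy σ)) (msubstTy σ R)
  | [] => rfl
  | _ :: Ds => congrArg (Ty.arr _) (msubstTy_mkArr σ R Ds)

theorem IsConstructorTy.exists_msubstTy_tyO {x : ℕ} {T : Ty} (h : IsConstructorTy x T) :
    ∃ Ds, msubstTy (fun _ => tyO) T = mkArr Ds tyO ∧ ∀ D ∈ Ds, TyClosed D := by
  obtain ⟨Ds, rfl, hDs⟩ := h
  refine ⟨_, msubstTy_mkArr _ _ Ds, ?_⟩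
  simp only [List.mem_map, forall_exists_index, and_imp]
  rintro _ D hD rfl
  rcases hDs D hD with rfl | hD
  · exact fun _ => nofun
  · rw [hD.1.msubstTy_eq]
    exact hD.1

theorem mkArr_var_ne_tyO (Ds : List Ty) (x : ℕ) : mkArr Ds (.var x) ≠ tyO := by
  cases Ds <;> simp [mkArr, tyO]

theorem IsOutputType.not_freeIn_of_typF_constructors {x : ℕ} {Γ : List Ty}
    (hΓ : ∀ T ∈ Γ, IsConstructorTy x T) {S : Ty} (hS : IsOutputType S) {a : Trm}
    (ha : IsNormal a) (h : TypF (Γ ++ [tyO]) a S) : ¬ FreeIn Γ.length a := by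
  have hO := typF_msubstTy h fun _ => tyO
  rw [hS.1.msubstTy_eq, List.map_append] at hO
  simpa using hS.not_freeIn_of_typF (Γ := Γ.map _) (by
    simp only [List.mem_map, forall_exists_index, and_imp]
    rintro _ T hT rfl
    exact (hΓ T hT).exists_msubstTy_tyO) ha hO

theorem not_freeIn_of_typF_constructors {x : ℕ} {Γ Ts : List Ty}
    (hΓ : ∀ T ∈ Γ, IsConstructorTy x T) (hTs : ∀ T ∈ Ts, IsConstructorTy x T) (M : Trm)
    (hM : IsNormal M) (h : TypF (Γ ++ [tyO]) M (mkArr Ts (.var x))) : ¬ FreeIn Γ.length M := by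
  have hX : ∀ Ds, EndsInAtom (mkArr Ds (.var x)) := fun _ => endsInAtom_mkArr.mpr trivial
  by_cases hlam : ∃ b, M = .lam b
  · obtain ⟨b, rfl⟩ := hlam
    obtain ⟨P, Q, hPQ, hb⟩ := h.lam_inv (hX Ts).not_isAll
    cases Ts with
    | nil => cases hPQ
    | cons T₀ Ts =>
        obtain ⟨rfl, rfl⟩ := Ty.arr.inj hPQ
        exact not_freeIn_of_typF_constructors (Γ := T₀ :: Γ)
          (fun T hT => (List.mem_cons.mp hT).elim (· ▸ hTs T₀ (by simp)) (hΓ T))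
          (fun T hT => hTs T (by simp [hT])) b (isNormal_lam_iff.mp hM) hb
  push Not at hlam
  obtain ⟨n, hn⟩ := hM.exists_spineHead hlam
  have hΓatom : ∀ T, (Γ ++ [tyO])[n]? = some T → EndsInAtom T := fun T hT => by
    rcases List.mem_append.mp (List.mem_of_getElem? hT) with hT | hT
    · obtain ⟨Ds, rfl, -⟩ := hΓ T hT
      exact hX Ds
    · rw [List.mem_singleton.mp hT]
      trivial
  obtain ⟨Ds, hDs, hargs⟩ := h.spine hΓatom (hX Ts).not_isAll hn
  obtain ⟨Es, hEs, hEsX⟩ : IsConstructorTy x (mkArr Ds (mkArr Ts (.var x))) := by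
    rcases List.mem_append.mp (List.mem_of_getElem? hDs) with hmem | hmem
    · exact hΓ _ hmem
    · rw [← mkArr_append] at hmem
      exact (mkArr_var_ne_tyO _ x (List.mem_singleton.mp hmem)).elim
  obtain ⟨Fs, rfl, -⟩ := eq_append_of_mkArr_eq_mkArr (R := .var x) (fun _ _ => nofun) hEs.symm
  intro hfree
  rcases freeIn_of_spineHead hn hfree with rfl | ⟨a, ha, hfa⟩
  · simp only [List.getElem?_append_right le_rfl, Nat.sub_self, List.getElem?_cons_zero,
      Option.some.injEq, ← mkArr_append] at hDs
    exact mkArr_var_ne_tyO _ x hDs.symm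
  obtain ⟨D, hD, haD⟩ := hargs.exists_of_mem_left ha
  rcases hEsX D (List.mem_append_left _ hD) with rfl | hS
  · exact not_freeIn_of_typF_constructors hΓ (Ts := []) nofun a (hM.of_mem_spineArgs ha) haD hfa
  · exact hS.not_freeIn_of_typF_constructors hΓ (hM.of_mem_spineArgs ha) haD hfa
termination_by M
decreasing_by
  · subst_vars
    simp
  · exact sizeOf_lt_of_mem_spineArgs ha

theorem containsConst_mkArr {c : ℕ} {R : Ty} : ∀ {Ds : List Ty},
    ContainsConst c (mkArr Ds R) ↔ (∃ D ∈ Ds, ContainsConst c D) ∨ ContainsConst c R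
  | [] => by simp [mkArr]
  | D :: Ds => by
      change ContainsConst c D ∨ ContainsConst c (mkArr Ds R) ↔ _
      rw [containsConst_mkArr]
      simp [or_assoc]

theorem IsConstructorTy.eq_of_tyFreeIn {x k : ℕ} {T : Ty} (h : IsConstructorTy x T)
    (hk : TyFreeIn k T) : k = x := by
  obtain ⟨Ds, rfl, hDs⟩ := h
  rcases tyFreeIn_mkArr.mp hk with ⟨D, hD, hk⟩ | hk
  · rcases hDs D hD with rfl | hS
    exacts [hk.symm, (hS.1 k hk).elim]
  · exact hk.symm

theorem IsConstructorTy.not_containsConst {x : ℕ} {T : Ty} (h : IsConstructorTy x T) :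
    ¬ ContainsConst 0 T := by
  obtain ⟨Ds, rfl, hDs⟩ := h
  intro hO
  rcases containsConst_mkArr.mp hO with ⟨D, hD, hO⟩ | hO
  · rcases hDs D hD with rfl | hS
    exacts [hO, hS.2.1 hO]
  · exact hO

theorem isOutputType_all_mkArr {Ts : List Ty} (hTs : ∀ T ∈ Ts, IsConstructorTy 0 T) :
    IsOutputType (.all (mkArr Ts (.var 0))) := by
  have hfree : ∀ k, TyFreeIn k (mkArr Ts (.var 0)) → k = 0 := fun k hk =>
    (tyFreeIn_mkArr.mp hk).elim (fun ⟨T, hT, hk⟩ => (hTs T hT).eq_of_tyFreeIn hk) Eq.symm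
  refine ⟨fun k hk => k.succ_ne_zero (hfree _ hk), fun hO => ?_, fun t ht h => ?_⟩
  · rcases containsConst_mkArr.mp hO with ⟨T, hT, hO⟩ | hO
    exacts [(hTs T hT).not_containsConst hO, hO]
  · have hX := h.allE (.var 0)
    rw [substTy_eq_msubstTy, msubstTy_eq_self _ _ fun n hn => by obtain rfl := hfree n hn; rfl]
      at hX
    exact not_freeIn_of_typF_constructors (Γ := []) nofun hTs t ht hX

/-- if `A` and `B` are output types, then `A ∧ B`, `A ∨ B`
and `LA` are output types. -/
theorem output_closed_under_and_or_list (A B : Ty)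
    (hA : IsOutputType A) (hB : IsOutputType B) :
    IsOutputType (tyAnd A B) ∧ IsOutputType (tyOr A B) ∧
      IsOutputType (tyList A) := by
  have hAnd : tyAnd A B = .all (mkArr [mkArr [A, B] (.var 0)] (.var 0)) := by
    simp [tyAnd, mkArr, hA.1.liftTy_eq, hB.1.liftTy_eq]
  have hOr : tyOr A B = .all (mkArr [mkArr [A] (.var 0), mkArr [B] (.var 0)] (.var 0)) := by
    simp [tyOr, mkArr, hA.1.liftTy_eq, hB.1.liftTy_eq]
  have hList :
      tyList A = .all (mkArr [mkArr [] (.var 0), mkArr [A, .var 0] (.var 0)] (.var 0)) := by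
    simp [tyList, mkArr, hA.1.liftTy_eq]
  refine ⟨hAnd ▸ isOutputType_all_mkArr ?_, hOr ▸ isOutputType_all_mkArr ?_,
    hList ▸ isOutputType_all_mkArr ?_⟩ <;>
  simp only [List.mem_cons, List.not_mem_nil, or_false, forall_eq_or_imp, forall_eq]
  · exact ⟨[A, B], rfl, by simp [hA, hB]⟩
  · exact ⟨⟨[A], rfl, by simp [hA]⟩, ⟨[B], rfl, by simp [hB]⟩⟩
  · exact ⟨⟨[], rfl, nofun⟩, ⟨[A, .var 0], rfl, by simp [hA]⟩⟩

end FarkhNour
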